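/- For shape parameters k_B > 0, k_E = 1 (i.e., γ_E exponential with scale θ_E), scale θ_B > 0, ratio ρ = θ_E/θ_B, and constant c = 2^{R_S} with R_S ≥ 0: ∫₀^∞ [Υ(k_B, c x/θ_B)/Γ(k_B)] · (1/θ_E) e^{−x/θ_E} dx = ρ^{k_B} c^{k_B} / (k_B · B(k_B, 1)) · ₂F₁(k_B + 1, k_B; 1 + k_B; −cρ), where Υ is the lower incomplete Gamma function, B the Beta function, and ₂F₁ the Gauss hypergeometric function. -/
import Mathlib
set_option maxHeartbeats 1000000

open MeasureTheory Set Filter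

/-- Lower incomplete Gamma function Υ(k, y) = ∫₀^y t^{k−1} e^{−t} dt. -/
noncomputable def lowerIncGamma (k y : ℝ) : ℝ :=
  ∫ t in Ioc (0 : ℝ) y, t ^ (k - 1) * Real.exp (-t)

/-- Beta function B(a,b) = Γ(a)Γ(b)/Γ(a+b). -/
noncomputable def betaFn (a b : ℝ) : ℝ := Real.Gamma a * Real.Gamma b / Real.Gamma (a + b)

/-- Gauss hypergeometric function ₂F₁ via its power series. -/
noncomputable def twoF1 (a b c z : ℝ) : ℝ :=
  ∑' n : ℕ, (ascPochhammer ℝ n).eval a * (ascPochhammer ℝ n).eval b /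
    ((ascPochhammer ℝ n).eval c * n.factorial) * z ^ n

lemma exp_tail {b : ℝ} (hb : 0 < b) (p : ℝ) :
    ∫ x in Ioi p, Real.exp (-(b*x)) = Real.exp (-(b*p)) / b := by
  have h := integral_comp_mul_left_Ioi (fun x => Real.exp (-x)) p hb
  simp only [smul_eq_mul] at h
  rw [h, integral_exp_neg_Ioi, eq_div_iff hb.ne', mul_comm, ← mul_assoc,
    mul_inv_cancel₀ hb.ne', one_mul]


lemma poch_pos {x : ℝ} (hx : 0 < x) (n : ℕ) : 0 < (ascPochhammer ℝ n).eval x := by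
  induction n with
  | zero => simp
  | succ n ih =>
    rw [ascPochhammer_succ_eval]
    have : (0:ℝ) < x + n := by positivity
    exact mul_pos ih this

lemma gamma_poch {a : ℝ} (ha : 0 < a) (n : ℕ) :
    Real.Gamma (a + n) = Real.Gamma a * (ascPochhammer ℝ n).eval a := by
  induction n with
  | zero => simp
  | succ n ih =>
    have h2 : (0:ℝ) < a + n := by positivity
    push_cast
    rw [show a + ((n:ℝ) + 1) = (a + n) + 1 by ring, Real.Gamma_add_one h2.ne', ih,
      ascPochhammer_succ_eval]
    ring

lemma integrable_rpow_exp {a r : ℝ} (ha : 0 < a) (hr : 0 < r) :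
    IntegrableOn (fun t : ℝ => t ^ (a-1) * Real.exp (-(r*t))) (Ioi 0) := by
  have h := Real.GammaIntegral_convergent ha
  have h2 : IntegrableOn (fun x : ℝ => Real.exp (-(r*x)) * (r*x) ^ (a-1)) (Ioi 0) := by
    have := (integrableOn_Ioi_comp_mul_left_iff
      (fun x => Real.exp (-x) * x ^ (a-1)) 0 hr).2 (by simpa using h)
    simpa using this
  have h3 : IntegrableOn (fun x : ℝ => r ^ ((1:ℝ)-a) *
      (Real.exp (-(r*x)) * (r*x) ^ (a-1))) (Ioi 0) := h2.const_mul _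
  apply h3.congr_fun ?_ measurableSet_Ioi
  intro x hx
  have hx0 : (0:ℝ) < x := hx
  simp only
  rw [Real.mul_rpow hr.le hx0.le]
  have h1 : r ^ ((1:ℝ) - a) * r ^ (a - 1) = 1 := by
    rw [← Real.rpow_add hr]; norm_num
  calc r ^ ((1:ℝ)-a) * (Real.exp (-(r * x)) * (r ^ (a-1) * x ^ (a-1)))
      = (r ^ ((1:ℝ)-a) * r ^ (a-1)) * (x ^ (a-1) * Real.exp (-(r*x))) := by ring
    _ = x ^ (a-1) * Real.exp (-(r*x)) := by rw [h1, one_mul]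

lemma exp_tsum (x : ℝ) : ∑' n : ℕ, x ^ n / (n.factorial : ℝ) = Real.exp x := by
  rw [Real.exp_eq_exp_ℝ, NormedSpace.exp_eq_tsum_div]

lemma binomial_tsum {a w : ℝ} (ha : 0 < a) (hw0 : 0 < w) (hw1 : w < 1) :
    ∑' n : ℕ, (ascPochhammer ℝ n).eval a / (n.factorial : ℝ) * (-w) ^ n
      = (1 + w) ^ (-a) := by
  have hΓ : 0 < Real.Gamma a := Real.Gamma_pos_of_pos ha
  set F : ℕ → ℝ → ℝ := fun n t => t ^ (a-1) * Real.exp (-t) * ((-w) ^ n * t ^ n / n.factorial)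
    with hF
  -- generic integral computation
  have key : ∀ (z : ℝ) (n : ℕ),
      ∫ t in Ioi (0:ℝ), t ^ (a-1) * Real.exp (-t) * (z ^ n * t ^ n / n.factorial)
        = z ^ n / n.factorial * Real.Gamma (a + n) := by
    intro z n
    have ha' : (0:ℝ) < a + n := by positivity
    have hcong : ∀ t ∈ Ioi (0:ℝ),
        t ^ (a-1) * Real.exp (-t) * (z ^ n * t ^ n / n.factorial)
          = (z ^ n / n.factorial) * (t ^ ((a + n) - 1) * Real.exp (-((1:ℝ)*t))) := by
      intro t ht
      have ht0 : (0:ℝ) < t := ht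
      rw [show t ^ ((a + (n:ℝ)) - 1) = t ^ (a - 1) * t ^ (n:ℝ) by
        rw [← Real.rpow_add ht0]; ring_nf]
      rw [Real.rpow_natCast, one_mul]
      ring
    rw [setIntegral_congr_fun measurableSet_Ioi hcong, integral_const_mul,
      Real.integral_rpow_mul_exp_neg_mul_Ioi ha' one_pos]
    norm_num
  -- integrability of each term
  have hF_int : ∀ n : ℕ, Integrable (F n) (volume.restrict (Ioi 0)) := by
    intro n
    have ha' : (0:ℝ) < a + n := by positivity
    have h1 : IntegrableOn (fun t : ℝ => ((-w) ^ n / n.factorial) *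
        (t ^ ((a + n) - 1) * Real.exp (-((1:ℝ)*t)))) (Ioi 0) :=
      (integrable_rpow_exp ha' one_pos).const_mul _
    apply h1.congr_fun ?_ measurableSet_Ioi
    intro t ht
    have ht0 : (0:ℝ) < t := ht
    simp only [hF]
    rw [show t ^ ((a + (n:ℝ)) - 1) = t ^ (a - 1) * t ^ (n:ℝ) by
      rw [← Real.rpow_add ht0]; ring_nf]
    rw [Real.rpow_natCast, one_mul]
    ring
  -- norm integrals
  have hnorm : ∀ n : ℕ, (∫ t in Ioi (0:ℝ), ‖F n t‖)
      = w ^ n / n.factorial * Real.Gamma (a + n) := by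
    intro n
    rw [← key w n]
    apply setIntegral_congr_fun measurableSet_Ioi
    intro t ht
    have ht0 : (0:ℝ) < t := ht
    simp only [hF]
    rw [Real.norm_eq_abs, abs_mul, abs_mul, abs_div, abs_mul, abs_pow, abs_pow, abs_neg,
      abs_of_pos hw0, abs_of_pos ht0, abs_of_pos (Real.exp_pos _),
      abs_of_pos (Real.rpow_pos_of_pos ht0 _), Nat.abs_cast]
  -- summability of the norm integrals
  have hsum : Summable (fun n : ℕ => w ^ n / (n.factorial:ℝ) * Real.Gamma (a + n)) := by
    set g : ℕ → ℝ := fun n => w ^ n / (n.factorial:ℝ) * Real.Gamma (a + n) with hg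
    have hgpos : ∀ n, 0 < g n := by
      intro n
      have : (0:ℝ) < a + n := by positivity
      have := Real.Gamma_pos_of_pos this
      positivity
    have hrat : ∀ n : ℕ, g (n+1) = g n * ((a + n) * w / ((n:ℝ)+1)) := by
      intro n
      have h2 : (0:ℝ) < a + n := by positivity
      have hfacs : (((n+1).factorial : ℕ) : ℝ) = ((n:ℝ)+1) * (n.factorial:ℝ) := by
        rw [Nat.factorial_succ]; push_cast; ring
      simp only [hg, Nat.cast_add, Nat.cast_one, hfacs]
      rw [show a + ((n:ℝ) + 1) = (a + n) + 1 by ring, Real.Gamma_add_one h2.ne']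
      have hfac : ((n.factorial:ℝ)) ≠ 0 := by positivity
      have hn1 : ((n:ℝ)+1) ≠ 0 := by positivity
      field_simp
      ring
    have htend : Tendsto (fun n : ℕ => (a + n) * w / ((n:ℝ)+1)) atTop (nhds w) := by
      have h1 : (fun n : ℕ => (a + n) * w / ((n:ℝ)+1))
          = fun n : ℕ => w * (1 + (a-1) * (1/((n:ℝ)+1))) := by
        funext n
        have : ((n:ℝ)+1) ≠ 0 := by positivity
        field_simp
        ring
      rw [h1]
      have := (tendsto_one_div_add_atTop_nhds_zero_nat.const_mul (a-1)).const_add (1:ℝ)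
      have := this.const_mul w
      simpa using this
    set r : ℝ := (w+1)/2 with hr
    have hr1 : r < 1 := by rw [hr]; linarith
    have hwr : w < r := by rw [hr]; linarith
    apply summable_of_ratio_norm_eventually_le hr1
    filter_upwards [htend.eventually_lt_const hwr] with n hn
    rw [hrat n, Real.norm_eq_abs, Real.norm_eq_abs, abs_of_pos (hgpos n),
      abs_of_pos (by
        have h2 : (0:ℝ) < a + n := by positivity
        have : (0:ℝ) < (a + n) * w / ((n:ℝ)+1) := by positivity
        exact mul_pos (hgpos n) this)]
    have h3 : 0 ≤ g n := (hgpos n).le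
    rw [mul_comm r (g n)]
    exact mul_le_mul_of_nonneg_left hn.le h3
  have hF_sum : Summable (fun n : ℕ => ∫ t in Ioi (0:ℝ), ‖F n t‖) := by
    apply hsum.congr
    intro n
    rw [hnorm n]
  -- swap sum and integral
  have hswap := integral_tsum_of_summable_integral_norm hF_int hF_sum
  -- pointwise sum
  have hpt : ∀ t : ℝ, ∑' n : ℕ, F n t
      = t ^ (a-1) * Real.exp (-t) * Real.exp (-w * t) := by
    intro t
    have h1 : ∀ n : ℕ, F n t
        = (t ^ (a-1) * Real.exp (-t)) * ((-w * t) ^ n / n.factorial) := by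
      intro n
      simp only [hF]
      rw [mul_pow]
    rw [tsum_congr h1, tsum_mul_left, exp_tsum]
  calc ∑' n : ℕ, (ascPochhammer ℝ n).eval a / (n.factorial : ℝ) * (-w) ^ n
      = ∑' n : ℕ, (1 / Real.Gamma a) * ((-w) ^ n / n.factorial * Real.Gamma (a + n)) := by
        apply tsum_congr
        intro n
        rw [gamma_poch ha n]
        field_simp
    _ = (1 / Real.Gamma a) * ∑' n : ℕ, ((-w) ^ n / (n.factorial:ℝ) * Real.Gamma (a + n)) :=
        tsum_mul_left
    _ = (1 / Real.Gamma a) * ∑' n : ℕ, ∫ t in Ioi (0:ℝ), F n t := by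
        congr 1
        apply tsum_congr
        intro n
        rw [← key (-w) n]
    _ = (1 / Real.Gamma a) * ∫ t in Ioi (0:ℝ), ∑' n : ℕ, F n t := by rw [hswap]
    _ = (1 / Real.Gamma a) * ∫ t in Ioi (0:ℝ), t ^ (a-1) * Real.exp (-((1+w)*t)) := by
        congr 1
        apply setIntegral_congr_fun measurableSet_Ioi
        intro t _
        show ∑' n : ℕ, F n t = t ^ (a-1) * Real.exp (-((1+w)*t))
        rw [hpt t, mul_assoc, ← Real.exp_add]
        ring_nf
    _ = (1 + w) ^ (-a) := by
        rw [Real.integral_rpow_mul_exp_neg_mul_Ioi ha (by linarith : (0:ℝ) < 1 + w)]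
        have h2 : ((1:ℝ)/(1+w)) ^ a = (1+w) ^ (-a) := by
          rw [one_div, ← Real.rpow_neg_one,
            ← Real.rpow_mul (by linarith : (0:ℝ) ≤ 1 + w), neg_one_mul]
        rw [h2]
        field_simp

lemma swap_lemma {a m b : ℝ} (ha : 0 < a) (hm : 0 < m) (hb : 0 < b) :
    ∫ x in Ioi (0:ℝ), (∫ t in Ioc (0:ℝ) (m*x), t^(a-1) * Real.exp (-t)) * Real.exp (-(b*x))
      = (1/b) * ((1/(1 + b/m))^a * Real.Gamma a) := by
  set g : ℝ → ℝ := fun t => t^(a-1) * Real.exp (-t) with hgdef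
  have hg_nonneg : ∀ t ∈ Ioi (0:ℝ), 0 ≤ g t := by
    intro t ht
    have : (0:ℝ) < t := ht
    positivity
  have hg_int : IntegrableOn g (Ioi 0) := by
    have h := integrable_rpow_exp ha one_pos
    simpa using h
  have hg_gamma : ∫ t in Ioi (0:ℝ), g t = Real.Gamma a := by
    rw [Real.Gamma_eq_integral ha]
    apply setIntegral_congr_fun measurableSet_Ioi
    intro t _
    simp only [hgdef]
    ring
  set f : ℝ → ℝ → ℝ := fun x t => (Ioc (0:ℝ) (m*x)).indicator g t * Real.exp (-(b*x))
    with hfdef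
  -- measurability on the product
  set S : Set (ℝ × ℝ) := {p | 0 < p.2} ∩ {p | p.2 ≤ m * p.1} with hSdef
  have hS : MeasurableSet S :=
    (measurableSet_lt measurable_const measurable_snd).inter
      (measurableSet_le measurable_snd (measurable_fst.const_mul m))
  have hGmeas : Measurable (fun p : ℝ × ℝ => g p.2 * Real.exp (-(b * p.1))) := by
    simp only [hgdef]
    fun_prop
  have huncurry : Function.uncurry f
      = S.indicator (fun p : ℝ × ℝ => g p.2 * Real.exp (-(b * p.1))) := by
    funext p
    by_cases h : p.2 ∈ Ioc (0:ℝ) (m * p.1)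
    · have hp : p ∈ S := ⟨h.1, h.2⟩
      simp only [Function.uncurry, hfdef, indicator_of_mem h, indicator_of_mem hp]
    · have hp : p ∉ S := by
        intro hp
        exact h ⟨hp.1, hp.2⟩
      simp only [Function.uncurry, hfdef, indicator_of_notMem h, indicator_of_notMem hp,
        zero_mul]
  have hAESM : AEStronglyMeasurable (Function.uncurry f)
      ((volume.restrict (Ioi (0:ℝ))).prod volume) := by
    rw [huncurry]
    exact (hGmeas.indicator hS).aestronglyMeasurable
  -- slice integrability
  have hslice : ∀ x : ℝ, Integrable (fun t => f x t) volume := by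
    intro x
    have hsub : Ioc (0:ℝ) (m*x) ⊆ Ioi 0 := fun t ht => ht.1
    exact ((hg_int.mono_set hsub).integrable_indicator measurableSet_Ioc).mul_const _
  -- norm integral computation for fixed x
  have hnormint : ∀ x : ℝ, (∫ t, ‖f x t‖)
      = (∫ t in Ioc (0:ℝ) (m*x), g t) * Real.exp (-(b*x)) := by
    intro x
    rw [← integral_indicator measurableSet_Ioc, ← integral_mul_const]
    congr 1
    funext t
    by_cases h : t ∈ Ioc (0:ℝ) (m*x)
    · simp only [hfdef, indicator_of_mem h, Real.norm_eq_abs, abs_mul,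
        abs_of_pos (Real.exp_pos _), abs_of_nonneg (hg_nonneg t h.1)]
    · simp [hfdef, indicator_of_notMem h]
  have hioc_le : ∀ x : ℝ, (∫ t in Ioc (0:ℝ) (m*x), g t) ≤ Real.Gamma a := by
    intro x
    rw [← hg_gamma]
    apply setIntegral_mono_set hg_int
    · filter_upwards [ae_restrict_mem measurableSet_Ioi] with t ht using hg_nonneg t ht
    · exact HasSubset.Subset.eventuallyLE (fun t ht => ht.1)
  have hioc_nonneg : ∀ x : ℝ, 0 ≤ ∫ t in Ioc (0:ℝ) (m*x), g t := by
    intro x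
    apply setIntegral_nonneg measurableSet_Ioc
    intro t ht
    exact hg_nonneg t ht.1
  -- product integrability
  have hint : Integrable (Function.uncurry f) ((volume.restrict (Ioi (0:ℝ))).prod volume) := by
    rw [integrable_prod_iff hAESM]
    constructor
    · exact Filter.Eventually.of_forall (fun x => hslice x)
    · have hmaj : Integrable (fun x : ℝ => Real.Gamma a * Real.exp (-(b*x)))
          (volume.restrict (Ioi 0)) := by
        have h := exp_neg_integrableOn_Ioi 0 hb
        simp only [neg_mul] at h
        exact h.const_mul _
      apply hmaj.mono (hAESM.norm.integral_prod_right')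
      apply Filter.Eventually.of_forall
      intro x
      have h1 : (∫ t, ‖f x t‖) = (∫ t in Ioc (0:ℝ) (m*x), g t) * Real.exp (-(b*x)) :=
        hnormint x
      have h2 : 0 ≤ ∫ t, ‖f x t‖ := integral_nonneg (fun t => norm_nonneg _)
      show |∫ y : ℝ, ‖f x y‖| ≤ |Real.Gamma a * Real.exp (-(b*x))|
      rw [abs_of_nonneg h2,
        abs_of_nonneg (by positivity : (0:ℝ) ≤ Real.Gamma a * Real.exp (-(b*x))), h1]
      exact mul_le_mul_of_nonneg_right (hioc_le x) (Real.exp_pos _).le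
  -- rewrite LHS as iterated integral and swap
  have hLHS : ∫ x in Ioi (0:ℝ), (∫ t in Ioc (0:ℝ) (m*x), g t) * Real.exp (-(b*x))
      = ∫ x in Ioi (0:ℝ), ∫ t, f x t := by
    apply setIntegral_congr_fun measurableSet_Ioi
    intro x _
    show (∫ t in Ioc (0:ℝ) (m*x), g t) * Real.exp (-(b*x)) = ∫ t, f x t
    rw [← integral_indicator measurableSet_Ioc, ← integral_mul_const]
  have hswap := integral_integral_swap hint
  -- compute inner integral after swap
  have hinner : (fun t : ℝ => ∫ x in Ioi (0:ℝ), f x t)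
      = (Ioi (0:ℝ)).indicator (fun t => g t * (Real.exp (-(b*(t/m))) / b)) := by
    funext t
    by_cases ht : 0 < t
    · have hdiv : 0 < t / m := div_pos ht hm
      have hfx : ∀ x : ℝ, f x t = (Ici (t/m)).indicator
          (fun x => g t * Real.exp (-(b*x))) x := by
        intro x
        by_cases hx : t/m ≤ x
        · have hle : t ≤ m * x := by
            rw [div_le_iff₀ hm] at hx
            linarith [hx]
          simp only [hfdef, indicator_of_mem (mem_Ici.mpr hx),
            indicator_of_mem (mem_Ioc.mpr ⟨ht, hle⟩)]
        · have hle : ¬ t ≤ m * x := by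
            rw [div_le_iff₀ hm] at hx
            intro h
            exact hx (by linarith)
          simp only [hfdef, indicator_of_notMem (fun h => hx (mem_Ici.mp h)),
            indicator_of_notMem (fun h => hle (mem_Ioc.mp h).2), zero_mul]
      rw [indicator_of_mem (mem_Ioi.mpr ht)]
      simp_rw [hfx]
      rw [setIntegral_indicator measurableSet_Ici]
      have hinter : Ioi (0:ℝ) ∩ Ici (t/m) = Ici (t/m) :=
        inter_eq_self_of_subset_right (fun x hx => lt_of_lt_of_le hdiv hx)
      rw [hinter, integral_Ici_eq_integral_Ioi, integral_const_mul, exp_tail hb (t/m)]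
    · rw [indicator_of_notMem (fun h => ht (mem_Ioi.mp h))]
      have hfx : ∀ x : ℝ, f x t = 0 := by
        intro x
        have : t ∉ Ioc (0:ℝ) (m*x) := fun h => ht h.1
        simp [hfdef, indicator_of_notMem this]
      simp_rw [hfx]
      exact integral_zero _ _
  -- final computation
  rw [hLHS, hswap]
  calc ∫ t, ∫ x in Ioi (0:ℝ), f x t
      = ∫ t, (Ioi (0:ℝ)).indicator (fun t => g t * (Real.exp (-(b*(t/m))) / b)) t := by
        rw [hinner]
    _ = ∫ t in Ioi (0:ℝ), g t * (Real.exp (-(b*(t/m))) / b) :=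
        integral_indicator measurableSet_Ioi
    _ = ∫ t in Ioi (0:ℝ), (1/b) * (t^(a-1) * Real.exp (-((1 + b/m)*t))) := by
        apply setIntegral_congr_fun measurableSet_Ioi
        intro t _
        simp only [hgdef]
        rw [mul_comm (t ^ (a-1) * Real.exp (-t))]
        rw [show -((1 + b/m)*t) = -t + -(b*(t/m)) by field_simp; ring, Real.exp_add]
        field_simp
    _ = (1/b) * ((1/(1 + b/m))^a * Real.Gamma a) := by
        rw [integral_const_mul, Real.integral_rpow_mul_exp_neg_mul_Ioi ha
          (by positivity : (0:ℝ) < 1 + b/m)]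

/-- Closed-form SOP lower bound in the exponential-eavesdropper case (k_E = 1):
∫₀^∞ [Υ(k_B, c x/θ_B)/Γ(k_B)] (1/θ_E) e^{−x/θ_E} dx
  = ρ^{k_B} c^{k_B}/(k_B B(k_B,1)) ₂F₁(k_B+1, k_B; 1+k_B; −cρ) with ρ = θ_E/θ_B. -/
theorem sop_closed_form_exponential_eavesdropper
    (kB θB θE RS : ℝ) (hkB : 0 < kB) (hθB : 0 < θB) (hθE : 0 < θE) (hRS : 0 ≤ RS)
    (c : ℝ) (hc : c = 2 ^ RS)
    (ρ : ℝ) (hρ : ρ = θE / θB) (hconv : c * ρ < 1) :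
    ∫ x in Ioi (0 : ℝ),
        lowerIncGamma kB (c * x / θB) / Real.Gamma kB * ((1 / θE) * Real.exp (-x / θE)) =
      ρ ^ kB * c ^ kB / (kB * betaFn kB 1) * twoF1 (kB + 1) kB (1 + kB) (-(c * ρ)) := by
  have hc0 : 0 < c := by rw [hc]; positivity
  have hρ0 : 0 < ρ := by rw [hρ]; positivity
  have hw0 : 0 < c * ρ := mul_pos hc0 hρ0
  have hΓ : 0 < Real.Gamma kB := Real.Gamma_pos_of_pos hkB
  have hm0 : (0:ℝ) < c / θB := by positivity
  have hb0 : (0:ℝ) < 1 / θE := by positivity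
  -- rewrite the LHS in the form of swap_lemma
  have hLHS : (∫ x in Ioi (0:ℝ),
        lowerIncGamma kB (c * x / θB) / Real.Gamma kB * ((1 / θE) * Real.exp (-x / θE)))
      = (∫ x in Ioi (0:ℝ), (∫ t in Ioc (0:ℝ) ((c/θB)*x), t^(kB-1) * Real.exp (-t)) *
          Real.exp (-((1/θE)*x))) * ((1/θE) / Real.Gamma kB) := by
    rw [← integral_mul_const]
    apply setIntegral_congr_fun measurableSet_Ioi
    intro x _
    show lowerIncGamma kB (c * x / θB) / Real.Gamma kB * ((1 / θE) * Real.exp (-x / θE)) = _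
    simp only [lowerIncGamma]
    rw [show c*x/θB = (c/θB)*x by ring, show -x/θE = -((1/θE)*x) by ring]
    ring
  -- the Beta factor
  have hbeta : kB * betaFn kB 1 = 1 := by
    rw [betaFn, Real.Gamma_one, Real.Gamma_add_one hkB.ne']
    field_simp
  -- the hypergeometric factor
  have htwo : twoF1 (kB+1) kB (1+kB) (-(c*ρ)) = (1 + c*ρ) ^ (-kB) := by
    rw [twoF1, ← binomial_tsum hkB hw0 hconv]
    apply tsum_congr
    intro n
    have hpos : (0:ℝ) < (ascPochhammer ℝ n).eval (kB+1) := poch_pos (by positivity) n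
    rw [show (1:ℝ)+kB = kB+1 by ring, mul_div_mul_left _ _ hpos.ne']
  rw [hLHS, swap_lemma hkB hm0 hb0, hbeta, htwo]
  have h1 : (1:ℝ) + (1/θE)/(c/θB) = (1 + c*ρ)/(c*ρ) := by
    rw [hρ]
    field_simp
    ring
  have h2 : ((c*ρ)/(1+c*ρ))^kB = ρ ^ kB * c ^ kB * (1+c*ρ) ^ (-kB) := by
    rw [Real.div_rpow hw0.le (by positivity), Real.mul_rpow hc0.le hρ0.le,
      Real.rpow_neg (by positivity : (0:ℝ) ≤ 1 + c*ρ)]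
    ring
  rw [h1, one_div_div (1+c*ρ) (c*ρ), h2, div_one]
  field_simp
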